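/- arXiv:1102.1493 — 2 statements merged into one kernel-verified Lean document; each statement's English description precedes it below -/
import Mathlib

section
/- Let λ ∈ ℂ with λ ≠ 0 and λ ≠ 1, and let S = {2πik − log λ : k ∈ ℤ}. Let F ⊆ S be a finite subset such that |a| < |b| for every a ∈ F and every b ∈ S ∖ F, and set μ := min{|b| : b ∈ S ∖ F} (this minimum exists and μ > 0). Then there exists a constant C > 0 such that for all integers n ≥ 2, |𝓑_n(0;λ)/n! + ∑_{a∈F} a^{−n}| ≤ C·μ^{−n}. -/
noncomputable def ABnum (lam : ℂ) : ℕ → ℂ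
  | 0 => 0
  | n + 1 =>
    ((if n = 0 then 1 else 0) -
        lam * ∑ k ∈ (Finset.range (n + 1)).attach,
          (((n + 1).choose k.1 : ℕ) : ℂ) * ABnum lam k.1) / (lam - 1)
decreasing_by exact Finset.mem_range.mp k.2

/-- The Apostol–Bernoulli polynomial `𝓑_n(x;λ)`. -/
noncomputable def ABpoly (lam : ℂ) (n : ℕ) (x : ℂ) : ℂ :=
  ∑ k ∈ Finset.range (n + 1), ((n.choose k : ℕ) : ℂ) * ABnum lam k * x ^ (n - k)

/-!
The recursion for `𝓑_n(λ)` says that `z / (λ e^z - 1) = ∑ 𝓑_n(λ) z^n / n!` near `0`. This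
function is meromorphic with simple poles exactly at the points `a ∈ S`, with residue `a` there.
Let `T` be `F` together with the poles of modulus `≤ μ`; the poles in `T \ F` have modulus exactly
`μ`, and since `S` is discrete no pole has modulus in `(μ, r]` for some `r > μ`. Removing the
principal parts `a / (z - a)`, `a ∈ T`, thus leaves a function holomorphic on the closed disc of
radius `r`, whose Taylor coefficients are `O(r^{-n})` by the Cauchy estimates. Expanding
`a / (z - a) = -∑ a^{-n} z^n` gives `𝓑_n(λ)/n! + ∑_{a ∈ T} a^{-n} = O(r^{-n})`, and the terms
`a^{-n}`, `a ∈ T \ F`, are bounded by `μ^{-n}`.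
-/

open Finset Nat Filter Topology Complex Metric
open scoped Real

theorem ABnum_recursion {lam : ℂ} (hlam1 : lam ≠ 1) (n : ℕ) :
    lam * ∑ k ∈ range (n + 1), (n.choose k : ℂ) * ABnum lam k
      = (if n = 1 then 1 else 0) + ABnum lam n := by
  cases n with
  | zero => simp [ABnum]
  | succ m =>
    rw [sum_range_succ, ABnum,
      sum_attach (range (m + 1)) fun k => ((m + 1).choose k : ℂ) * ABnum lam k]
    simp only [choose_self, cast_one, one_mul, Nat.add_eq_right]
    field_simp
    ring

theorem eq_ABnum_of_recursion {lam : ℂ} (hlam1 : lam ≠ 1) {d : ℕ → ℂ}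
    (hd : ∀ n, lam * ∑ k ∈ range (n + 1), (n.choose k : ℂ) * d k = (if n = 1 then 1 else 0) + d n)
    (n : ℕ) : d n = ABnum lam n := by
  induction n using Nat.strong_induction_on with
  | _ n ih =>
    have hB := ABnum_recursion hlam1 n
    have hdn := hd n
    rw [sum_range_succ, sum_congr rfl fun k hk => by rw [ih k (mem_range.1 hk)]] at hdn
    rw [sum_range_succ] at hB
    simp only [choose_self, cast_one, one_mul] at hdn hB
    have hmul : (lam - 1) * d n = (lam - 1) * ABnum lam n := by linear_combination hdn - hB
    exact mul_left_cancel₀ (sub_ne_zero.2 hlam1) hmul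

theorem ABpoly_zero (lam : ℂ) (n : ℕ) : ABpoly lam n 0 = ABnum lam n := by
  rw [ABpoly, sum_eq_single_of_mem n (self_mem_range_succ n)]
  · simp
  · intro k hk hkn
    rw [zero_pow (Nat.sub_ne_zero_of_lt (lt_of_le_of_ne (mem_range_succ_iff.1 hk) hkn)), mul_zero]

theorem eq_of_eventually_hasSum_mul_pow {𝕜 : Type*} [NontriviallyNormedField 𝕜] {a b : ℕ → 𝕜}
    {f : 𝕜 → 𝕜} (ha : ∀ᶠ z in 𝓝 0, HasSum (fun n => a n * z ^ n) (f z))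
    (hb : ∀ᶠ z in 𝓝 0, HasSum (fun n => b n * z ^ n) (f z)) : a = b := by
  have hps : ∀ c : ℕ → 𝕜, (∀ᶠ z in 𝓝 0, HasSum (fun n => c n * z ^ n) (f z)) →
      HasFPowerSeriesAt f (FormalMultilinearSeries.ofScalars 𝕜 c) 0 := fun c hc =>
    hasFPowerSeriesAt_iff.2 (by simpa [mul_comm] using hc)
  simpa using (hps a ha).eq_formalMultilinearSeries (hps b hb)

theorem hasSum_mul_exp_mul {lam : ℂ} {c : ℕ → ℂ} {z w : ℂ}
    (hc : HasSum (fun n => c n * z ^ n) w) :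
    HasSum (fun n => lam * (∑ k ∈ range (n + 1), c k / ((n - k)! : ℂ)) * z ^ n)
      (lam * exp z * w) := by
  have he : HasSum (fun n => z ^ n / (n ! : ℂ)) (exp z) := by
    rw [Complex.exp_eq_exp_ℂ]; exact NormedSpace.expSeries_div_hasSum_exp z
  have hc' : Summable fun n => ‖c n * z ^ n‖ := summable_norm_iff.2 hc.summable
  have he' : Summable fun n => ‖z ^ n / (n ! : ℂ)‖ := summable_norm_iff.2 he.summable
  have hprod := (hasSum_sum_range_mul_of_summable_norm hc' he').mul_left lam
  rw [hc.tsum_eq, he.tsum_eq] at hprod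
  have hterm : ∀ n : ℕ, lam * (∑ k ∈ range (n + 1), c k / ((n - k)! : ℂ)) * z ^ n
      = lam * ∑ k ∈ range (n + 1), c k * z ^ k * (z ^ (n - k) / ((n - k)! : ℂ)) := fun n => by
    rw [mul_assoc, sum_mul]
    congr 1
    refine sum_congr rfl fun k hk => ?_
    rw [← pow_mul_pow_sub z (mem_range_succ_iff.1 hk)]
    ring
  rw [mul_assoc, mul_comm (exp z)]
  simpa only [hterm] using hprod

theorem eventually_mul_exp_sub_one_ne_zero {lam : ℂ} (hlam1 : lam ≠ 1) :
    ∀ᶠ z in 𝓝 0, lam * exp z - 1 ≠ 0 :=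
  (by fun_prop : Continuous fun z => lam * exp z - 1).continuousAt.eventually_ne
    (by simpa [sub_eq_zero] using hlam1)

theorem ABnum_eq_factorial_mul_of_hasSum {lam : ℂ} (hlam1 : lam ≠ 1) {c : ℕ → ℂ}
    (hc : ∀ᶠ z in 𝓝 0, HasSum (fun n => c n * z ^ n) (z / (lam * exp z - 1))) (n : ℕ) :
    ABnum lam n = n ! * c n := by
  -- compare coefficients in `λ e^z · z / (λ e^z - 1) = z + z / (λ e^z - 1)`
  have hrec : ∀ n : ℕ, lam * ∑ k ∈ range (n + 1), c k / ((n - k)! : ℂ)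
      = (if n = 1 then 1 else 0) + c n := by
    refine congrFun (eq_of_eventually_hasSum_mul_pow (f := fun z => z + z / (lam * exp z - 1))
      ?_ ?_)
    · filter_upwards [hc, eventually_mul_exp_sub_one_ne_zero hlam1] with z hz hne
      have h := hasSum_mul_exp_mul (lam := lam) hz
      rwa [show lam * exp z * (z / (lam * exp z - 1)) = z + z / (lam * exp z - 1) by
        field_simp; ring] at h
    · filter_upwards [hc] with z hz
      refine ((hasSum_ite_eq 1 z).add hz).congr_fun fun n => ?_
      split_ifs with h <;> simp [h, add_mul]
  refine (eq_ABnum_of_recursion hlam1 (d := fun k => k ! * c k) (fun n => ?_) n).symm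
  have hfac : ∀ k ∈ range (n + 1),
      (n.choose k : ℂ) * (k ! * c k) = n ! * (c k / ((n - k)! : ℂ)) := fun k hk => by
    rw [← Nat.choose_mul_factorial_mul_factorial (mem_range_succ_iff.1 hk)]
    push_cast
    field_simp [(n - k).factorial_ne_zero]
  rw [sum_congr rfl hfac, ← mul_sum, mul_left_comm, hrec]
  split_ifs with h <;> simp [h, mul_add]

theorem hasSum_div_sub {a z : ℂ} (hz : ‖z‖ < ‖a‖) :
    HasSum (fun n => -(a ^ n)⁻¹ * z ^ n) (a / (z - a)) := by
  have ha : a ≠ 0 := norm_pos_iff.1 ((norm_nonneg z).trans_lt hz)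
  have hq : ‖z / a‖ < 1 := by rwa [norm_div, div_lt_one (norm_pos_iff.2 ha)]
  have hval : a / (z - a) = -(1 - z / a)⁻¹ := by
    rw [one_sub_div ha, inv_div, ← div_neg, neg_sub]
  rw [hval]
  exact (hasSum_geometric_of_norm_lt_one hq).neg.congr_fun fun n => by rw [div_pow]; ring

theorem ABnum_div_factorial_eq_coeff_sub {lam : ℂ} (hlam1 : lam ≠ 1) {T : Finset ℂ}
    (hT0 : 0 ∉ T) {h : ℂ → ℂ} {p : FormalMultilinearSeries ℂ ℂ ℂ} (hp : HasFPowerSeriesAt h p 0)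
    (hh : ∀ᶠ z in 𝓝 0, z / (lam * exp z - 1) = ∑ a ∈ T, a / (z - a) + h z) (n : ℕ) :
    ABnum lam n / n ! = p.coeff n - ∑ a ∈ T, (a ^ n)⁻¹ := by
  rw [ABnum_eq_factorial_mul_of_hasSum hlam1 (c := fun n => p.coeff n - ∑ a ∈ T, (a ^ n)⁻¹) ?_ n,
    mul_div_cancel_left₀ _ (by exact_mod_cast n.factorial_ne_zero)]
  have hnear : ∀ᶠ z in 𝓝 (0 : ℂ), ∀ a ∈ T, ‖z‖ < ‖a‖ := (eventually_all_finset T).2 fun a ha =>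
    (continuous_norm.tendsto' 0 0 norm_zero).eventually_lt_const
      (norm_pos_iff.2 (ne_of_mem_of_not_mem ha hT0))
  filter_upwards [hh, hasFPowerSeriesAt_iff.1 hp, hnear] with z hz hpz hzT
  rw [zero_add] at hpz
  rw [hz]
  refine ((hasSum_sum fun a ha => hasSum_div_sub (hzT a ha)).add hpz).congr_fun fun n => ?_
  simp only [smul_eq_mul, sub_mul, sum_mul, neg_mul, sum_neg_distrib]
  ring

theorem exists_differentiable_eq_prod_sub_smul {E : Type*} [NormedAddCommGroup E]
    [NormedSpace ℂ E] [CompleteSpace E] {g : ℂ → E} (hg : Differentiable ℂ g) (T : Finset ℂ)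
    (hT : ∀ a ∈ T, g a = 0) :
    ∃ G : ℂ → E, Differentiable ℂ G ∧ ∀ z, g z = (∏ a ∈ T, (z - a)) • G z := by
  classical
  induction T using Finset.induction_on generalizing g with
  | empty => exact ⟨g, hg, by simp⟩
  | insert a T haT ih =>
    have hga : g a = 0 := hT a (mem_insert_self a T)
    have hdslope : Differentiable ℂ (dslope g a) := differentiableOn_univ.1 <|
      (Complex.differentiableOn_dslope univ_mem).2 hg.differentiableOn
    obtain ⟨G, hG, hgG⟩ := ih hdslope fun b hb => by
      rw [dslope_of_ne _ (ne_of_mem_of_not_mem hb haT), slope_def_module, hga,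
        hT b (mem_insert_of_mem hb), sub_zero, smul_zero]
    refine ⟨G, hG, fun z => ?_⟩
    rw [prod_insert haT, mul_smul, ← hgG, sub_smul_dslope_of_zero hga]

theorem exists_differentiableOn_eq_sum_div_sub_add {f g : ℂ → ℂ} (hf : Differentiable ℂ f)
    (hg : Differentiable ℂ g) {T : Finset ℂ} (hfT : ∀ a ∈ T, f a = 0)
    (hf' : ∀ a ∈ T, deriv f a ≠ 0) {K : Set ℂ} (hK : ∀ z ∈ K, z ∉ T → f z ≠ 0) :
    ∃ h : ℂ → ℂ, DifferentiableOn ℂ h K ∧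
      ∀ z, f z ≠ 0 → g z / f z = ∑ a ∈ T, g a / deriv f a / (z - a) + h z := by
  classical
  have hdslope : ∀ a, Differentiable ℂ (dslope f a) := fun a => differentiableOn_univ.1 <|
    (Complex.differentiableOn_dslope univ_mem).2 hf.differentiableOn
  set N : ℂ → ℂ := fun z => g z - ∑ a ∈ T, g a / deriv f a * dslope f a z
  have hN : Differentiable ℂ N :=
    hg.sub <| Differentiable.fun_sum fun a _ => (hdslope a).const_mul _
  have hNT : ∀ b ∈ T, N b = 0 := by
    intro b hb
    have hsum : ∑ a ∈ T, g a / deriv f a * dslope f a b = g b / deriv f b * deriv f b := by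
      rw [sum_eq_single_of_mem b hb, dslope_same]
      intro a ha hab
      rw [dslope_of_ne _ (Ne.symm hab), slope_def_field, hfT a ha, hfT b hb, sub_zero, zero_div,
        mul_zero]
    simp only [N, hsum, div_mul_cancel₀ _ (hf' b hb), sub_self]
  obtain ⟨F, hF, hfF⟩ := exists_differentiable_eq_prod_sub_smul hf T hfT
  obtain ⟨G, hG, hNG⟩ := exists_differentiable_eq_prod_sub_smul hN T hNT
  simp only [smul_eq_mul] at hfF hNG
  -- a zero of `F` at `a ∈ T` would make `a` a double zero of `f`
  have hFne : ∀ z ∈ K, F z ≠ 0 := by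
    intro z hz h0
    by_cases hzT : z ∈ T
    · refine hf' z hzT ?_
      have hP : DifferentiableAt ℂ (fun w => ∏ a ∈ T, (w - a)) z := by fun_prop
      rw [show f = fun w => (∏ a ∈ T, (w - a)) * F w from funext hfF, deriv_fun_mul hP (hF z), h0,
        prod_eq_zero hzT (sub_self z)]
      ring
    · exact hK z hz hzT (by rw [hfF z, h0, mul_zero])
  refine ⟨fun z => G z / F z, fun z hz => ((hG z).div (hF z) (hFne z hz)).differentiableWithinAt,
    fun z hz => ?_⟩
  have hzT : z ∉ T := fun h => hz (hfT z h)
  have hsum : ∑ a ∈ T, g a / deriv f a * dslope f a z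
      = f z * ∑ a ∈ T, g a / deriv f a / (z - a) := by
    rw [mul_sum]
    refine sum_congr rfl fun a ha => ?_
    rw [dslope_of_ne _ (ne_of_mem_of_not_mem ha hzT).symm, slope_def_field, hfT a ha, sub_zero]
    ring
  have hgN : g z = N z + f z * ∑ a ∈ T, g a / deriv f a / (z - a) := by
    simp only [N, hsum, sub_add_cancel]
  rw [hfF z] at hz ⊢
  rw [hgN, hNG z, hfF z]
  have hPz : ∏ a ∈ T, (z - a) ≠ 0 := left_ne_zero_of_mul hz
  have hFz : F z ≠ 0 := right_ne_zero_of_mul hz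
  field_simp
  ring

theorem exists_pos_norm_coeff_cauchyPowerSeries_le (f : ℂ → ℂ) (c : ℂ) {R : ℝ} (hR : 0 < R) :
    ∃ M > 0, ∀ n, ‖(cauchyPowerSeries f c R).coeff n‖ ≤ M / R ^ n := by
  refine ⟨max 1 ((2 * π)⁻¹ * ∫ θ in 0..2 * π, ‖f (circleMap c R θ)‖), by positivity, fun n => ?_⟩
  have hcauchy := norm_cauchyPowerSeries_le f c R n
  rw [abs_of_pos hR] at hcauchy
  rw [← FormalMultilinearSeries.norm_apply_eq_norm_coef, div_eq_mul_inv, ← inv_pow]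
  exact hcauchy.trans (by gcongr; exact le_max_right _ _)

theorem exists_norm_ABnum_div_factorial_add_sum_le {lam : ℂ} (hlam1 : lam ≠ 1) {T : Finset ℂ}
    (hT : ∀ a ∈ T, lam * exp a = 1) {r : ℝ} (hr0 : 0 < r)
    (hr : ∀ z, ‖z‖ ≤ r → lam * exp z = 1 → z ∈ T) :
    ∃ M > 0, ∀ n, ‖ABnum lam n / n ! + ∑ a ∈ T, (a ^ n)⁻¹‖ ≤ M / r ^ n := by
  have hT0 : 0 ∉ T := fun h0 => hlam1 (by simpa using hT 0 h0)
  have hderiv : ∀ a ∈ T, deriv (fun z => lam * exp z - 1) a = 1 := fun a ha => by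
    rw [(((hasDerivAt_exp a).const_mul lam).sub_const 1).deriv, hT a ha]
  obtain ⟨h, hh, hfh⟩ := exists_differentiableOn_eq_sum_div_sub_add (g := fun z => z)
    (by fun_prop) differentiable_id (fun a ha => sub_eq_zero.2 (hT a ha))
    (fun a ha => by simp [hderiv a ha]) (K := closedBall 0 r) fun z hz hzT hz0 =>
      hzT (hr z (mem_closedBall_zero_iff.1 hz) (sub_eq_zero.1 hz0))
  have hcoeff := ABnum_div_factorial_eq_coeff_sub hlam1 hT0
    (hh.hasFPowerSeriesOnBall (R := ⟨r, hr0.le⟩) hr0).hasFPowerSeriesAt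
    ((eventually_mul_exp_sub_one_ne_zero hlam1).mono fun z hz => by
      rw [hfh z hz, sum_congr rfl fun a ha => by rw [hderiv a ha, div_one]])
  obtain ⟨M, hM, hqM⟩ := exists_pos_norm_coeff_cauchyPowerSeries_le h 0 hr0
  exact ⟨M, hM, fun n => by rw [hcoeff, sub_add_cancel]; exact hqM n⟩

theorem norm_sub_sum_inv_pow_le {x : ℂ} {U : Finset ℂ} {μ r M : ℝ} {n : ℕ} (hμ : 0 < μ)
    (hμr : μ ≤ r) (hM : 0 ≤ M) (hx : ‖x‖ ≤ M / r ^ n) (hU : ∀ a ∈ U, μ ≤ ‖a‖) :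
    ‖x - ∑ a ∈ U, (a ^ n)⁻¹‖ ≤ (M + #U) / μ ^ n := by
  calc _ ≤ ‖x‖ + ∑ a ∈ U, ‖(a ^ n)⁻¹‖ := norm_sub_le_of_le le_rfl (norm_sum_le _ _)
    _ ≤ M / μ ^ n + ∑ a ∈ U, 1 / μ ^ n := by
        gcongr with a ha
        · exact hx.trans (by gcongr)
        · rw [norm_inv, norm_pow, ← one_div]
          exact one_div_le_one_div_of_le (by positivity) (by gcongr; exact hU a ha)
    _ = (M + #U) / μ ^ n := by rw [sum_const, nsmul_eq_mul, mul_one_div, ← add_div]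

theorem exists_int_eq_iff_mul_exp_eq_one {lam : ℂ} (hlam0 : lam ≠ 0) (a : ℂ) :
    (∃ k : ℤ, a = 2 * π * I * k - log lam) ↔ lam * exp a = 1 := by
  rw [show lam * exp a = exp (log lam + a) by rw [exp_add, exp_log hlam0], exp_eq_one_iff]
  refine exists_congr fun k => ⟨fun h => ?_, fun h => ?_⟩ <;> linear_combination h

theorem finite_setOf_exists_int_inter_closedBall (c : ℂ) (R : ℝ) :
    ({a : ℂ | ∃ k : ℤ, a = 2 * π * I * k - c} ∩ closedBall 0 R).Finite := by
  refine ((isCompact_closedBall (0 : ℤ) ((R + ‖c‖) / (2 * π))).finite_of_discrete.image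
    fun k : ℤ => 2 * π * I * k - c).subset ?_
  rintro _ ⟨⟨k, rfl⟩, ha⟩
  refine ⟨k, ?_, rfl⟩
  rw [mem_closedBall_zero_iff] at ha ⊢
  rw [Int.norm_eq_abs, le_div_iff₀ (by positivity)]
  calc |(k : ℝ)| * (2 * π) = ‖2 * π * I * k‖ := by simp [abs_of_pos Real.pi_pos]; ring
    _ ≤ ‖2 * π * I * k - c‖ + ‖c‖ := norm_le_norm_sub_add _ _
    _ ≤ R + ‖c‖ := by gcongr

theorem exists_gt_forall_norm_le_imp_le {E : Type*} [SeminormedAddCommGroup E] {S : Set E}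
    (hS : ∀ R, (S ∩ closedBall 0 R).Finite) (μ : ℝ) :
    ∃ r > μ, ∀ a ∈ S, ‖a‖ ≤ r → ‖a‖ ≤ μ := by
  have hev : ∀ᶠ r in 𝓝[>] μ, r < μ + 1 ∧ ∀ a ∈ S ∩ closedBall 0 (μ + 1), μ < ‖a‖ → r < ‖a‖ :=
    eventually_nhdsWithin_of_eventually_nhds <| (eventually_lt_nhds (lt_add_one μ)).and <|
      (eventually_all_finite (hS (μ + 1))).2 fun a _ => by
        by_cases h : μ < ‖a‖
        · exact (eventually_lt_nhds h).mono fun r hr _ => hr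
        · exact Eventually.of_forall fun r h' => absurd h' h
  obtain ⟨r, ⟨hr1, hr⟩, hμr⟩ := (hev.and self_mem_nhdsWithin).exists
  exact ⟨r, hμr, fun a ha har => not_lt.1 fun hμa =>
    (har.trans_lt (hr a ⟨ha, mem_closedBall_zero_iff.2 (har.trans hr1.le)⟩ hμa)).false⟩

theorem apostol_bernoulli_numbers_asymptotic_general (lam : ℂ) (hlam0 : lam ≠ 0) (hlam1 : lam ≠ 1)
    (S : Set ℂ) (hS : S = {a : ℂ | ∃ k : ℤ, a = 2 * Real.pi * Complex.I * k - Complex.log lam})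
    (F : Finset ℂ) (hFS : ↑F ⊆ S)
    (μ : ℝ) (hμ : IsLeast ((fun z : ℂ => ‖z‖) '' (S \ ↑F)) μ) :
    0 < μ ∧ ∃ C > 0, ∀ n : ℕ, 2 ≤ n →
      ‖ABpoly lam n 0 / (n.factorial : ℂ) + ∑ a ∈ F, (a ^ n)⁻¹‖ ≤ C / μ ^ n := by
  have hpole : ∀ a, a ∈ S ↔ lam * exp a = 1 := fun a => by
    rw [hS]; exact exists_int_eq_iff_mul_exp_eq_one hlam0 a
  obtain ⟨⟨b, ⟨hbS, -⟩, rfl⟩, hb⟩ := hμ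
  have hbpos : 0 < ‖b‖ := norm_pos_iff.2 fun hb0 => hlam1 (by simpa [hb0] using (hpole b).1 hbS)
  have hfin : ∀ R, (S ∩ closedBall 0 R).Finite := hS ▸ finite_setOf_exists_int_inter_closedBall _
  obtain ⟨r, hbr, hr⟩ := exists_gt_forall_norm_le_imp_le hfin ‖b‖
  set T := F ∪ (hfin ‖b‖).toFinset
  have hTS : ∀ a ∈ T, a ∈ S := fun a ha => by
    rcases mem_union.1 ha with ha | ha
    exacts [hFS ha, ((hfin ‖b‖).mem_toFinset.1 ha).1]
  obtain ⟨M, hM, hMT⟩ := exists_norm_ABnum_div_factorial_add_sum_le hlam1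
    (fun a ha => (hpole a).1 (hTS a ha)) (hbpos.trans hbr) fun z hz hz1 =>
      mem_union_right _ ((hfin ‖b‖).mem_toFinset.2
        ⟨(hpole z).2 hz1, mem_closedBall_zero_iff.2 (hr z ((hpole z).2 hz1) hz)⟩)
  refine ⟨hbpos, M + #(T \ F), by positivity, fun n _ => ?_⟩
  have hsplit : ABnum lam n / n ! + ∑ a ∈ F, (a ^ n)⁻¹
      = ABnum lam n / n ! + ∑ a ∈ T, (a ^ n)⁻¹ - ∑ a ∈ T \ F, (a ^ n)⁻¹ := by
    rw [← sum_sdiff (subset_union_left : F ⊆ T)]; ring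
  rw [ABpoly_zero, hsplit]
  exact norm_sub_sum_inv_pow_le hbpos hbr.le hM.le (hMT n) fun a ha =>
    hb ⟨a, ⟨hTS a (mem_sdiff.1 ha).1, (mem_sdiff.1 ha).2⟩, rfl⟩

theorem apostol_bernoulli_numbers_asymptotic (lam : ℂ) (hlam0 : lam ≠ 0) (hlam1 : lam ≠ 1)
    (S : Set ℂ) (hS : S = {a : ℂ | ∃ k : ℤ, a = 2 * Real.pi * Complex.I * k - Complex.log lam})
    (F : Finset ℂ) (hFS : ↑F ⊆ S)
    (hlt : ∀ a ∈ F, ∀ b ∈ S \ ↑F, ‖a‖ < ‖b‖)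
    (μ : ℝ) (hμ : IsLeast ((fun z : ℂ => ‖z‖) '' (S \ ↑F)) μ) :
    0 < μ ∧ ∃ C > 0, ∀ n : ℕ, 2 ≤ n →
      ‖ABpoly lam n 0 / (n.factorial : ℂ) + ∑ a ∈ F, (a ^ n)⁻¹‖ ≤ C / μ ^ n :=
  apostol_bernoulli_numbers_asymptotic_general lam hlam0 hlam1 S hS F hFS μ hμ
end

section
/- Let λ ∈ ℂ with λ ≠ −1. Then for every integer n ≥ 0 and every x ∈ ℂ, 𝓔_n(x;λ) = −(2/(n+1))·𝓑_{n+1}(x;−λ). -/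
noncomputable def AEnum (lam : ℂ) : ℕ → ℂ
  | 0 => 2 / (lam + 1)
  | n + 1 =>
    (-lam * ∑ k ∈ (Finset.range (n + 1)).attach,
        (((n + 1).choose k.1 : ℕ) : ℂ) * AEnum lam k.1) / (lam + 1)
decreasing_by exact Finset.mem_range.mp k.2

/-- The Apostol–Euler polynomial `𝓔_n(x;λ)`. -/
noncomputable def AEpoly (lam : ℂ) (n : ℕ) (x : ℂ) : ℂ :=
  ∑ k ∈ Finset.range (n + 1), ((n.choose k : ℕ) : ℂ) * AEnum lam k * x ^ (n - k)

open Finset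

theorem sum_range_succ_choose_mul_of_apply_zero {K : Type*} [Field K] [CharZero K]
    (b g : ℕ → K) (hb : b 0 = 0) (n N : ℕ) :
    ∑ k ∈ range (N + 1), ((n + 1).choose k : K) * b k * g k =
      (n + 1) * ∑ k ∈ range N, (n.choose k : K) * (b (k + 1) / (k + 1)) * g (k + 1) := by
  rw [sum_range_succ', hb, mul_zero, zero_mul, add_zero, mul_sum]
  refine sum_congr rfl fun k _ => ?_
  have hchoose : ((n + 1 : ℕ) : K) * n.choose k = (n + 1).choose (k + 1) * (k + 1 : ℕ) := by
    exact_mod_cast Nat.add_one_mul_choose_eq n k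
  have hk : (k + 1 : K) ≠ 0 := Nat.cast_add_one_ne_zero k
  push_cast at hchoose
  field_simp
  linear_combination -b (k + 1) * g (k + 1) * hchoose

theorem ABnum_zero (lam : ℂ) : ABnum lam 0 = 0 := by
  rw [ABnum]

theorem ABnum_succ (lam : ℂ) (n : ℕ) :
    ABnum lam (n + 1) =
      ((if n = 0 then 1 else 0) -
        lam * ∑ k ∈ range (n + 1), ((n + 1).choose k : ℂ) * ABnum lam k) / (lam - 1) := by
  rw [ABnum, sum_attach (range (n + 1)) fun k => ((n + 1).choose k : ℂ) * ABnum lam k]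

theorem AEnum_zero (lam : ℂ) : AEnum lam 0 = 2 / (lam + 1) := by
  rw [AEnum]

theorem AEnum_succ (lam : ℂ) (n : ℕ) :
    AEnum lam (n + 1) =
      (-lam * ∑ k ∈ range (n + 1), ((n + 1).choose k : ℂ) * AEnum lam k) / (lam + 1) := by
  rw [AEnum, sum_attach (range (n + 1)) fun k => ((n + 1).choose k : ℂ) * AEnum lam k]

theorem ABnum_neg_succ_div (lam : ℂ) (n : ℕ) :
    ABnum (-lam) (n + 1) / (n + 1) = -AEnum lam n / 2 := by
  induction n using Nat.strong_induction_on with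
  | _ n ih =>
  have hneg : -lam - 1 = -(lam + 1) := by ring
  rcases n with _ | m
  · rw [ABnum_succ, sum_range_one, ABnum_zero, AEnum_zero, if_pos rfl, hneg, div_neg]
    ring
  · set S := ∑ k ∈ range (m + 1), ((m + 1).choose k : ℂ) * AEnum lam k
    have hsum : ∑ k ∈ range (m + 1 + 1), ((m + 1 + 1).choose k : ℂ) * ABnum (-lam) k =
        -((m + 2) / 2) * S := by
      have hshift := sum_range_succ_choose_mul_of_apply_zero (ABnum (-lam)) (fun _ => 1)
        (ABnum_zero _) (m + 1) (m + 1)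
      simp only [mul_one] at hshift
      rw [hshift, mul_sum, mul_sum]
      refine sum_congr rfl fun k hk => ?_
      rw [ih k (mem_range.mp hk)]
      push_cast
      ring
    have hm : (m + 2 : ℂ) ≠ 0 := by exact_mod_cast Nat.succ_ne_zero (m + 1)
    rw [ABnum_succ, AEnum_succ, hsum, if_neg m.succ_ne_zero, hneg]
    push_cast
    simp only [div_eq_mul_inv, inv_neg]
    linear_combination lam * S * (lam + 1)⁻¹ / 2 * mul_inv_cancel₀ hm

theorem ABpoly_neg_succ (lam : ℂ) (n : ℕ) (x : ℂ) :
    ABpoly (-lam) (n + 1) x = -((n + 1) / 2) * AEpoly lam n x := by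
  rw [ABpoly, sum_range_succ_choose_mul_of_apply_zero _ (fun k => x ^ (n + 1 - k))
    (ABnum_zero _), AEpoly, mul_sum, mul_sum]
  refine sum_congr rfl fun k _ => ?_
  rw [Nat.add_sub_add_right, ABnum_neg_succ_div]
  ring

theorem apostol_euler_eq_apostol_bernoulli_general (lam : ℂ) (n : ℕ) (x : ℂ) :
    AEpoly lam n x = -(2 / ((n : ℂ) + 1)) * ABpoly (-lam) (n + 1) x := by
  have hn : (n + 1 : ℂ) ≠ 0 := Nat.cast_add_one_ne_zero n
  rw [ABpoly_neg_succ]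
  field_simp

theorem apostol_euler_eq_apostol_bernoulli (lam : ℂ) (hlam : lam ≠ -1) (n : ℕ) (x : ℂ) :
    AEpoly lam n x = -(2 / ((n : ℂ) + 1)) * ABpoly (-lam) (n + 1) x :=
  apostol_euler_eq_apostol_bernoulli_general lam n x
end
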